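/- (Theorem 1) Let T be a finite tree with a designated root, g_e > 0 strictly positive conductances on its edges, K = K_{1/g} the path-sum matrix with weights 1/g_e, and Σ_p a symmetric matrix indexed by the non-root vertices with all entries strictly positive. Set Σ_ε = K Σ_p K. Then for any two distinct non-root vertices a and b such that a is a descendant of b: Σ_ε(a,a) > Σ_ε(b,b). -/

import Mathlib

open Classical

/-- A finite tree with a designated root vertex (the slack bus). -/
structure GridTree (V : Type*) [Fintype V] [DecidableEq V] where
  graph : SimpleGraph V
  root : V
  isTree : graph.IsTree

namespace GridTree

variable {V : Type*} [Fintype V] [DecidableEq V] (T : GridTree V)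

/-- The unique path (as a walk) from a vertex to the root. -/
noncomputable def pathToRoot (a : V) : T.graph.Walk a T.root :=
  (T.isTree.existsUnique_path a T.root).choose

/-- `E_a`: the set of edges on the unique path from `a` to the root. -/
noncomputable def pathEdges (a : V) : Finset (Sym2 V) :=
  (T.pathToRoot a).edges.toFinset

/-- `c` is a descendant of `a`: `a` lies on the unique path from `c` to the root
(in particular every vertex is a descendant of itself). -/
def Descendant (c a : V) : Prop := a ∈ (T.pathToRoot c).support

/-- `b` is the parent of `a`: the edge `{a, b}` lies on the path from `a` to the root
(equivalently, `b` is the unique neighbor of `a` on that path). -/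
noncomputable def IsParent (a b : V) : Prop := s(a, b) ∈ T.pathEdges a

/-- The path-sum matrix `K_w`, indexed by the non-root vertices:
`K_w(a,b) = ∑_{e ∈ E_a ∩ E_b} w_e`. -/
noncomputable def pathMatrix (w : Sym2 V → ℝ) :
    Matrix {v : V // v ≠ T.root} {v : V // v ≠ T.root} ℝ :=
  fun a b => ∑ e ∈ T.pathEdges a.1 ∩ T.pathEdges b.1, w e

/-- The reduced weighted graph Laplacian with edge weights `w`, indexed by the
non-root vertices (the row and column of the root are deleted). -/
noncomputable def lap (w : Sym2 V → ℝ) :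
    Matrix {v : V // v ≠ T.root} {v : V // v ≠ T.root} ℝ :=
  fun a b =>
    if a = b then ∑ c ∈ Finset.univ.filter (fun c => T.graph.Adj a.1 c), w s(a.1, c)
    else if T.graph.Adj a.1 b.1 then - w s(a.1, b.1) else 0

end GridTree

/-
Write `K = K_{1/g}`. Since `K` is symmetric, `Σ_ε(x,x) = Kₓ ⬝ Σ_p Kₓ` is the quadratic form of
`Σ_p` at the row `Kₓ`. If `a` lies strictly below `b`, then `E_b ⊊ E_a`, so every entry
`K(b,i) = ∑_{E_b ∩ E_i} 1/g` is at most `K(a,i)`, while `K(b,a) = ∑_{E_b} 1/g < ∑_{E_a} 1/g = K(a,a)`.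
A quadratic form with nonnegative entries and positive diagonal is strictly monotone along such
entrywise comparisons of nonnegative vectors.
-/

namespace Matrix

variable {ι : Type*} [Fintype ι]

lemma dotProduct_mulVec_self_lt_of_le_of_lt {S : Matrix ι ι ℝ} (hS : ∀ i j, 0 ≤ S i j)
    {u v : ι → ℝ} (hu : 0 ≤ u) (huv : u ≤ v) {k : ι} (hSk : 0 < S k k) (hk : u k < v k) :
    u ⬝ᵥ S *ᵥ u < v ⬝ᵥ S *ᵥ v := by
  have hSu : 0 ≤ S *ᵥ u := fun i => Finset.sum_nonneg fun j _ => mul_nonneg (hS i j) (hu j)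
  have hSuv : S *ᵥ u ≤ S *ᵥ v := fun i =>
    Finset.sum_le_sum fun j _ => mul_le_mul_of_nonneg_left (huv j) (hS i j)
  have hSuv_k : (S *ᵥ u) k < (S *ᵥ v) k :=
    Finset.sum_lt_sum (fun j _ => mul_le_mul_of_nonneg_left (huv j) (hS k j))
      ⟨k, Finset.mem_univ k, mul_lt_mul_of_pos_left hk hSk⟩
  exact Finset.sum_lt_sum
    (fun i _ => mul_le_mul (huv i) (hSuv i) (hSu i) ((hu i).trans (huv i)))
    ⟨k, Finset.mem_univ k, mul_lt_mul'' hk hSuv_k (hu k) (hSu k)⟩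

lemma mul_mul_apply_self_of_isSymm {K : Matrix ι ι ℝ} (hK : K.IsSymm) (S : Matrix ι ι ℝ)
    (x : ι) : (K * S * K) x x = K x ⬝ᵥ S *ᵥ K x := by
  rw [mul_mul_apply, hK.eq]

end Matrix

namespace GridTree

variable {V : Type*} [Fintype V] [DecidableEq V] (T : GridTree V)

lemma pathToRoot_isPath (a : V) : (T.pathToRoot a).IsPath :=
  (T.isTree.existsUnique_path a T.root).choose_spec.1

lemma dropUntil_pathToRoot {a b : V} (h : T.Descendant a b) :
    (T.pathToRoot a).dropUntil b h = T.pathToRoot b :=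
  (T.isTree.existsUnique_path b T.root).choose_spec.2 _ ((T.pathToRoot_isPath a).dropUntil h)

lemma pathEdges_subset_of_descendant {a b : V} (h : T.Descendant a b) :
    T.pathEdges b ⊆ T.pathEdges a := by
  intro e he
  simp only [pathEdges, List.mem_toFinset, ← T.dropUntil_pathToRoot h] at he ⊢
  exact (T.pathToRoot a).edges_dropUntil_subset_edges h he

lemma card_pathEdges (a : V) : (T.pathEdges a).card = (T.pathToRoot a).length := by
  rw [pathEdges, List.toFinset_card_of_nodup (T.pathToRoot_isPath a).edges_nodup,
    SimpleGraph.Walk.length_edges]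

lemma card_pathEdges_lt_of_descendant {a b : V} (h : T.Descendant a b) (hne : a ≠ b) :
    (T.pathEdges b).card < (T.pathEdges a).card := by
  rw [card_pathEdges, card_pathEdges, ← T.dropUntil_pathToRoot h]
  exact SimpleGraph.Walk.length_dropUntil_lt_length h hne.symm

lemma mem_edgeSet_of_mem_pathEdges {a : V} {e : Sym2 V} (he : e ∈ T.pathEdges a) :
    e ∈ T.graph.edgeSet := by
  simp only [pathEdges, List.mem_toFinset] at he
  exact (T.pathToRoot a).edges_subset_edgeSet he

lemma pathMatrix_isSymm (w : Sym2 V → ℝ) : (T.pathMatrix w).IsSymm :=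
  Matrix.IsSymm.ext fun i j => by simp only [pathMatrix, Finset.inter_comm]

variable {w : Sym2 V → ℝ} {a b : {v : V // v ≠ T.root}}

lemma pathMatrix_nonneg (hw : ∀ e ∈ T.graph.edgeSet, 0 ≤ w e) (i j : {v : V // v ≠ T.root}) :
    0 ≤ T.pathMatrix w i j :=
  Finset.sum_nonneg fun e he =>
    hw e (T.mem_edgeSet_of_mem_pathEdges (Finset.mem_inter.1 he).1)

lemma pathMatrix_le_of_descendant (hw : ∀ e ∈ T.graph.edgeSet, 0 ≤ w e)
    (h : T.Descendant a.1 b.1) (i : {v : V // v ≠ T.root}) :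
    T.pathMatrix w b i ≤ T.pathMatrix w a i :=
  Finset.sum_le_sum_of_subset_of_nonneg
    (Finset.inter_subset_inter_right (T.pathEdges_subset_of_descendant h)) fun e he _ =>
      hw e (T.mem_edgeSet_of_mem_pathEdges (Finset.mem_inter.1 he).1)

lemma pathMatrix_lt_of_descendant (hw : ∀ e ∈ T.graph.edgeSet, 0 < w e)
    (h : T.Descendant a.1 b.1) (hne : a ≠ b) :
    T.pathMatrix w b a < T.pathMatrix w a a := by
  have hsub := T.pathEdges_subset_of_descendant h
  obtain ⟨e, hea, heb⟩ := Finset.exists_mem_notMem_of_card_lt_card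
    (T.card_pathEdges_lt_of_descendant h (Subtype.coe_ne_coe.2 hne))
  simp only [pathMatrix, Finset.inter_self, Finset.inter_eq_left.2 hsub]
  exact Finset.sum_lt_sum_of_subset hsub hea heb (hw e (T.mem_edgeSet_of_mem_pathEdges hea))
    fun e he _ => (hw e (T.mem_edgeSet_of_mem_pathEdges he)).le

end GridTree

theorem sigma_eps_diag_increases_down_tree_general
    {V : Type*} [Fintype V] [DecidableEq V] (T : GridTree V)
    (g : Sym2 V → ℝ) (hg : ∀ e ∈ T.graph.edgeSet, 0 < g e)
    (Sp : Matrix {v : V // v ≠ T.root} {v : V // v ≠ T.root} ℝ)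
    (hpos : ∀ i j, 0 < Sp i j)
    (a b : {v : V // v ≠ T.root}) (hne : a ≠ b) (hdesc : T.Descendant a.1 b.1) :
    (T.pathMatrix (fun e => (g e)⁻¹) * Sp * T.pathMatrix (fun e => (g e)⁻¹)) a a >
      (T.pathMatrix (fun e => (g e)⁻¹) * Sp * T.pathMatrix (fun e => (g e)⁻¹)) b b := by
  have hw : ∀ e ∈ T.graph.edgeSet, 0 < (g e)⁻¹ := fun e he => inv_pos.2 (hg e he)
  have hK := T.pathMatrix_isSymm fun e => (g e)⁻¹
  rw [gt_iff_lt, Matrix.mul_mul_apply_self_of_isSymm hK, Matrix.mul_mul_apply_self_of_isSymm hK]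
  exact Matrix.dotProduct_mulVec_self_lt_of_le_of_lt (fun i j => (hpos i j).le)
    (T.pathMatrix_nonneg (fun e he => (hw e he).le) b)
    (T.pathMatrix_le_of_descendant (fun e he => (hw e he).le) hdesc) (hpos a a)
    (T.pathMatrix_lt_of_descendant hw hdesc hne)

/-- **Theorem 1.** In the DC-resistive model `Σ_ε = K Σ_p K` with
`K = K_{1/g}` and `Σ_p` symmetric entrywise positive, if the non-root vertex `a` is a
descendant of the non-root vertex `b` with `a ≠ b`, then `Σ_ε(a,a) > Σ_ε(b,b)`. -/
theorem sigma_eps_diag_increases_down_tree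
    {V : Type*} [Fintype V] [DecidableEq V] (T : GridTree V)
    (g : Sym2 V → ℝ) (hg : ∀ e ∈ T.graph.edgeSet, 0 < g e)
    (Sp : Matrix {v : V // v ≠ T.root} {v : V // v ≠ T.root} ℝ)
    (hsym : Sp.IsSymm) (hpos : ∀ i j, 0 < Sp i j)
    (a b : {v : V // v ≠ T.root}) (hne : a ≠ b) (hdesc : T.Descendant a.1 b.1) :
    (T.pathMatrix (fun e => (g e)⁻¹) * Sp * T.pathMatrix (fun e => (g e)⁻¹)) a a >
      (T.pathMatrix (fun e => (g e)⁻¹) * Sp * T.pathMatrix (fun e => (g e)⁻¹)) b b :=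
  sigma_eps_diag_increases_down_tree_general T g hg Sp hpos a b hne hdesc
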